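/- Let ρ : ℝ → ℝ be p-times differentiable with ρ^{(p)} being (r-p)-Hölder continuous for some r with p < r ≤ p+1, with Hölder constant H. Let W : ℝ → ℝ be integrable with ∫ W = 1, ∫ y^l W(y) dy = 0 for l = 1,…,p, and ∫ |y|^r |W(y)| dy < ∞. Then for every h > 0, sup_{x∈ℝ} |(ρ ∗ h^{-1}W(·/h))(x) - ρ(x)| ≤ (H h^r / p!) ∫_ℝ |y|^r |W(y)| dy. -/

import Mathlib

/-!
Expand `ρ (x - y h)` in `y` by Taylor's formula of order `p` around `x`. Because `W` has unit
mass and vanishing moments of orders `1, …, p`, integrating the Taylor polynomial against `W`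
returns exactly `ρ x`, so only the remainder survives. With the Lagrange form of the remainder,
the Hölder condition on `ρ⁽ᵖ⁾` bounds it by `H |y h| ^ r / p!`.
-/

open MeasureTheory Set Finset Nat

section Taylor

variable {f : ℝ → ℝ} {p : ℕ}

theorem taylorWithinEval_uIcc_eq_sum (hf : ContDiff ℝ p f) {b t : ℝ} (ht : t ≠ 0) :
    taylorWithinEval f p (uIcc b (b + t)) b (b + t) =
      ∑ k ∈ range (p + 1), iteratedDeriv k f b * t ^ k / k ! := by
  rw [taylor_within_apply]
  refine sum_congr rfl fun k hk => ?_
  have hkp : (k : WithTop ℕ∞) ≤ p := by exact_mod_cast Nat.lt_succ_iff.mp (mem_range.mp hk)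
  rw [iteratedDerivWithin_eq_iteratedDeriv (uniqueDiffOn_uIcc (by simpa using ht))
    (hf.contDiffAt.of_le hkp) left_mem_uIcc, smul_eq_mul, add_sub_cancel_left]
  ring

theorem exists_sub_taylor_sum_eq_iteratedDeriv_sub (hf : ContDiff ℝ p f) (b t : ℝ) :
    ∃ c, |c - b| ≤ |t| ∧ f (b + t) - ∑ k ∈ range (p + 1), iteratedDeriv k f b * t ^ k / k ! =
      (iteratedDeriv p f c - iteratedDeriv p f b) * t ^ p / p ! := by
  rcases eq_or_ne t 0 with rfl | ht
  · exact ⟨b, by simp, by simp [sum_range_succ']⟩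
  cases p with
  | zero => exact ⟨b + t, by simp, by simp⟩
  | succ n =>
    obtain ⟨c, hc, heq⟩ := taylor_mean_remainder_lagrange_iteratedDeriv
      (x₀ := b) (x := b + t) (by simpa using ht) hf.contDiffOn
    rw [taylorWithinEval_uIcc_eq_sum (hf.of_le (by exact_mod_cast n.le_succ)) ht,
      add_sub_cancel_left] at heq
    refine ⟨c, ?_, ?_⟩
    · simpa using abs_sub_left_of_mem_uIcc (uIoo_subset_uIcc_self hc)
    · rw [sum_range_succ, ← sub_sub, heq]
      ring

theorem abs_sub_taylor_sum_le_of_holder {r H : ℝ} (hpr : (p : ℝ) < r) (hH : 0 ≤ H)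
    (hf : ContDiff ℝ p f)
    (hHold : ∀ x y, |iteratedDeriv p f x - iteratedDeriv p f y| ≤ H * |x - y| ^ (r - p))
    (b t : ℝ) :
    |f (b + t) - ∑ k ∈ range (p + 1), iteratedDeriv k f b * t ^ k / k !| ≤
      H / p ! * |t| ^ r := by
  obtain ⟨c, hcb, heq⟩ := exists_sub_taylor_sum_eq_iteratedDeriv_sub hf b t
  have hpow : |t| ^ (r - p) * |t| ^ p = |t| ^ r := by
    rw [← Real.rpow_natCast, ← Real.rpow_add' (abs_nonneg t) (by linarith), sub_add_cancel]
  rw [heq]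
  calc |(iteratedDeriv p f c - iteratedDeriv p f b) * t ^ p / p !|
      = |iteratedDeriv p f c - iteratedDeriv p f b| * |t| ^ p / p ! := by
        rw [abs_div, abs_mul, abs_pow, Nat.abs_cast]
    _ ≤ H * |c - b| ^ (r - p) * |t| ^ p / p ! := by gcongr; exact hHold c b
    _ ≤ H * |t| ^ (r - p) * |t| ^ p / p ! := by gcongr
    _ = H / p ! * |t| ^ r := by rw [mul_assoc, hpow]; ring

end Taylor

section Moments

variable {μ : Measure ℝ} {W : ℝ → ℝ} {p : ℕ}

theorem integrable_pow_mul_of_integrable_rpow_mul {r : ℝ} {k : ℕ} (hk : (k : ℝ) ≤ r)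
    (hW : Integrable W μ) (hWr : Integrable (fun y => |y| ^ r * |W y|) μ) :
    Integrable (fun y => y ^ k * W y) μ := by
  refine (hW.abs.add hWr).mono' ((continuous_pow k).aestronglyMeasurable.mul hW.1) ?_
  refine Filter.Eventually.of_forall fun y => ?_
  have hyk : |y| ^ k ≤ 1 + |y| ^ r := by
    rcases le_or_gt |y| 1 with hy | hy
    · linarith [pow_le_one₀ (n := k) (abs_nonneg y) hy, Real.rpow_nonneg (abs_nonneg y) r]
    · rw [← Real.rpow_natCast]
      linarith [Real.rpow_le_rpow_of_exponent_le hy.le hk]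
  rw [Real.norm_eq_abs, abs_mul, abs_pow]
  calc |y| ^ k * |W y| ≤ (1 + |y| ^ r) * |W y| := by gcongr
    _ = |W y| + |y| ^ r * |W y| := by ring

theorem integrable_sum_pow_mul (c : ℕ → ℝ)
    (hint : ∀ k ≤ p, Integrable (fun y => y ^ k * W y) μ) :
    Integrable (fun y => (∑ k ∈ range (p + 1), c k * y ^ k) * W y) μ := by
  simp_rw [sum_mul, mul_assoc]
  exact integrable_finsetSum _ fun k hk =>
    (hint k (Nat.lt_succ_iff.mp (mem_range.mp hk))).const_mul (c k)

theorem integral_sum_pow_mul_eq_of_moments (c : ℕ → ℝ)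
    (hint : ∀ k ≤ p, Integrable (fun y => y ^ k * W y) μ) (hW1 : ∫ y, W y ∂μ = 1)
    (hWl : ∀ l : ℕ, 1 ≤ l → l ≤ p → ∫ y, y ^ l * W y ∂μ = 0) :
    ∫ y, (∑ k ∈ range (p + 1), c k * y ^ k) * W y ∂μ = c 0 := by
  simp_rw [sum_mul, mul_assoc]
  rw [integral_finsetSum _ fun k hk =>
    (hint k (Nat.lt_succ_iff.mp (mem_range.mp hk))).const_mul (c k), sum_range_succ']
  simp_rw [integral_const_mul]
  rw [sum_eq_zero fun k hk => by
    rw [hWl (k + 1) k.succ_pos (Nat.succ_le_of_lt (mem_range.mp hk)), mul_zero]]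
  simp [hW1]

end Moments

theorem stmt6_general (p : ℕ) (r H h : ℝ) (hpr : (p:ℝ) < r)
    (hH : 0 ≤ H) (hh : 0 < h) (ρ W : ℝ → ℝ)
    (hρ : ContDiff ℝ p ρ)
    (hHold : ∀ x y : ℝ,
      |iteratedDeriv p ρ x - iteratedDeriv p ρ y| ≤ H * |x - y| ^ (r - p))
    (hW : Integrable W) (hW1 : ∫ y, W y = 1)
    (hWl : ∀ l : ℕ, 1 ≤ l → l ≤ p → ∫ y, y^l * W y = 0)
    (hWr : Integrable (fun y => |y| ^ r * |W y|))
    (hconv : ∀ x : ℝ, Integrable (fun y => ρ (x - y*h) * W y)) :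
    ∀ x : ℝ, |(∫ y, ρ (x - y*h) * W y) - ρ x|
      ≤ H * h ^ r / (Nat.factorial p) * ∫ y, |y| ^ r * |W y| := by
  intro x
  set c : ℕ → ℝ := fun k => iteratedDeriv k ρ x * (-h) ^ k / (k ! : ℝ)
  set P : ℝ → ℝ := fun y => ∑ k ∈ range (p + 1), c k * y ^ k
  have hint : ∀ k ≤ p, Integrable (fun y => y ^ k * W y) := fun k hk =>
    integrable_pow_mul_of_integrable_rpow_mul ((Nat.cast_le.mpr hk).trans hpr.le) hW hWr
  have hP : ∫ y, P y * W y = ρ x := by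
    simpa [c] using integral_sum_pow_mul_eq_of_moments c hint hW1 hWl
  have hremainder : ∀ y, |ρ (x - y * h) - P y| ≤ H * h ^ r / p ! * |y| ^ r := fun y => by
    have hPy : P y = ∑ k ∈ range (p + 1), iteratedDeriv k ρ x * (-(y * h)) ^ k / k ! :=
      sum_congr rfl fun k _ => by simp only [c]; ring
    have := abs_sub_taylor_sum_le_of_holder hpr hH hρ hHold x (-(y * h))
    rw [abs_neg, abs_mul, abs_of_pos hh, Real.mul_rpow (abs_nonneg y) hh.le, ← sub_eq_add_neg,
      ← hPy] at this
    exact this.trans_eq (by ring)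
  rw [← hP, ← integral_sub (hconv x) (integrable_sum_pow_mul c hint), ← integral_const_mul,
    ← Real.norm_eq_abs]
  refine norm_integral_le_of_norm_le (hWr.const_mul _) (Filter.Eventually.of_forall fun y => ?_)
  rw [← sub_mul, Real.norm_eq_abs, abs_mul, ← mul_assoc]
  exact mul_le_mul_of_nonneg_right (hremainder y) (abs_nonneg _)

theorem stmt6 (p : ℕ) (r H h : ℝ) (hpr : (p:ℝ) < r) (hr : r ≤ (p:ℝ) + 1)
    (hH : 0 ≤ H) (hh : 0 < h) (ρ W : ℝ → ℝ)
    (hρ : ContDiff ℝ p ρ)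
    (hHold : ∀ x y : ℝ,
      |iteratedDeriv p ρ x - iteratedDeriv p ρ y| ≤ H * |x - y| ^ (r - p))
    (hW : Integrable W) (hW1 : ∫ y, W y = 1)
    (hWl : ∀ l : ℕ, 1 ≤ l → l ≤ p → ∫ y, y^l * W y = 0)
    (hWr : Integrable (fun y => |y| ^ r * |W y|))
    (hconv : ∀ x : ℝ, Integrable (fun y => ρ (x - y*h) * W y)) :
    ∀ x : ℝ, |(∫ y, ρ (x - y*h) * W y) - ρ x|
      ≤ H * h ^ r / (Nat.factorial p) * ∫ y, |y| ^ r * |W y| :=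
  stmt6_general p r H h hpr hH hh ρ W hρ hHold hW hW1 hWl hWr hconv
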